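/- arXiv:1309.6289 — 2 statements merged into one kernel-verified Lean document; each statement's English description precedes it below -/
import Mathlib

section
/- Let X be a countable subshift of finite type (SFT) over a finite alphabet A and let c ∈ X be at level 1. Then every pattern appearing in c appears at infinitely many positions in c. -/
set_option linter.unusedSectionVars false
set_option maxHeartbeats 1000000
open Filter Topology Set


namespace CountableSubshift

/-- A configuration over alphabet `A` on the plane `ℤ × ℤ`. -/
abbrev Config (A : Type*) := ℤ × ℤ → A

variable {A : Type*}

/-- The shift by a vector `v`. -/
def shift (v : ℤ × ℤ) (x : Config A) : Config A := fun u => x (u + v)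

/-- The shift-orbit of a configuration. -/
def orbit (x : Config A) : Set (Config A) := Set.range fun v => shift v x

variable [TopologicalSpace A]

/-- `Preceq x y` iff `x` belongs to the closure of the shift-orbit of `y`. -/
def Preceq (x y : Config A) : Prop := x ∈ closure (orbit y)

/-- Strict version of `Preceq`. -/
def Prec (x y : Config A) : Prop := Preceq x y ∧ ¬ Preceq y x

/-- `x ≈ y` : mutual `Preceq`. -/
def OrbEquiv (x y : Config A) : Prop := Preceq x y ∧ Preceq y x

/-- A subshift: nonempty, closed and shift-invariant set of configurations. -/
def IsSubshift (X : Set (Config A)) : Prop :=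
  X.Nonempty ∧ IsClosed X ∧ ∀ v : ℤ × ℤ, shift v '' X = X

/-- A configuration is periodic if it has two linearly independent vectors of periodicity. -/
def Periodic (x : Config A) : Prop :=
  ∃ v w : ℤ × ℤ, shift v x = x ∧ shift w x = x ∧ LinearIndependent ℤ ![v, w]

/-- `x` is at level 0 in `X`: it is `Preceq`-minimal in `X`. -/
def Level0 (X : Set (Config A)) (x : Config A) : Prop :=
  x ∈ X ∧ ∀ y ∈ X, Preceq y x → Preceq x y

/-- `x` is at level 1 in `X`. -/
def Level1 (X : Set (Config A)) (x : Config A) : Prop :=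
  x ∈ X ∧ ¬ Level0 X x ∧ ∀ y ∈ X, Prec y x → Level0 X y

/-- `x` is at level 2 in `X`. -/
def Level2 (X : Set (Config A)) (x : Config A) : Prop :=
  x ∈ X ∧ ¬ Level0 X x ∧ ¬ Level1 X x ∧ ∀ y ∈ X, Prec y x → Level0 X y ∨ Level1 X y

/-- The pattern `p` with (finite) domain `D` appears in `x` at position `u`. -/
def AppearsAt (D : Finset (ℤ × ℤ)) (p : ℤ × ℤ → A) (x : Config A) (u : ℤ × ℤ) : Prop :=
  ∀ d ∈ D, x (u + d) = p d

/-- A subshift of finite type: the nonempty set of configurations avoiding a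
finite family of forbidden patterns. -/
def IsSFT (X : Set (Config A)) : Prop :=
  X.Nonempty ∧ ∃ (n : ℕ) (D : Fin n → Finset (ℤ × ℤ)) (p : Fin n → ℤ × ℤ → A),
    X = {x : Config A | ∀ (i : Fin n) (u : ℤ × ℤ), ¬ AppearsAt (D i) (p i) x u}

/-- Every pattern appearing in `c` appears at infinitely many positions. -/
def AllPatternsInfinite (c : Config A) : Prop :=
  ∀ (D : Finset (ℤ × ℤ)) (u : ℤ × ℤ),
    {u' : ℤ × ℤ | ∀ d ∈ D, c (u' + d) = c (u + d)}.Infinite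

/-- The standard dot product on `ℤ × ℤ`. -/
def dot (u w : ℤ × ℤ) : ℤ := u.1 * w.1 + u.2 * w.2

section Aux
open Filter Topology Set
variable {A : Type*} [TopologicalSpace A]

-- norm
def nrm (w : ℤ × ℤ) : ℕ := max w.1.natAbs w.2.natAbs

lemma nrm_le_iff {w : ℤ × ℤ} {N : ℕ} : nrm w ≤ N ↔ w.1.natAbs ≤ N ∧ w.2.natAbs ≤ N := by
  simp [nrm]

lemma finite_ball (N : ℕ) : {w : ℤ × ℤ | nrm w ≤ N}.Finite := by
  have : {w : ℤ × ℤ | nrm w ≤ N} ⊆ Set.Icc ((-(N:ℤ), -(N:ℤ))) ((N:ℤ), (N:ℤ)) := by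
    intro w hw
    rw [Set.mem_setOf_eq, nrm_le_iff] at hw
    obtain ⟨h1, h2⟩ := hw
    simp only [Set.mem_Icc, Prod.le_def]
    omega
  exact (Set.finite_Icc _ _).subset this

lemma exists_nrm_bound {s : Set (ℤ × ℤ)} (hs : s.Finite) : ∃ N : ℕ, ∀ w ∈ s, nrm w ≤ N := by
  obtain ⟨N, hN⟩ := (hs.image nrm).bddAbove
  exact ⟨N, fun w hw => hN (Set.mem_image_of_mem _ hw)⟩

@[simp] lemma shift_apply (v : ℤ × ℤ) (x : Config A) (u : ℤ × ℤ) : shift v x u = x (u + v) := rfl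

lemma shift_shift (v w : ℤ × ℤ) (x : Config A) : shift v (shift w x) = shift (v + w) x := by
  funext u; simp [shift, add_assoc]

@[simp] lemma shift_zero (x : Config A) : shift 0 x = x := by funext u; simp [shift]

lemma continuous_shift (v : ℤ × ℤ) : Continuous (shift v : Config A → Config A) :=
  continuous_pi fun u => continuous_apply (u + v)

def shiftHomeo (v : ℤ × ℤ) : Config A ≃ₜ Config A where
  toFun := shift v
  invFun := shift (-v)
  left_inv := fun x => by rw [shift_shift]; simp
  right_inv := fun x => by rw [shift_shift]; simp
  continuous_toFun := continuous_shift v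
  continuous_invFun := continuous_shift (-v)

lemma mem_orbit_self (x : Config A) : x ∈ orbit x := ⟨0, shift_zero x⟩

lemma shift_mem_orbit (v : ℤ × ℤ) (x : Config A) : shift v x ∈ orbit x := ⟨v, rfl⟩

lemma shift_image_orbit (v : ℤ × ℤ) (x : Config A) : shift v '' orbit x = orbit x := by
  ext y
  constructor
  · rintro ⟨_, ⟨w, rfl⟩, rfl⟩
    rw [shift_shift]; exact ⟨v + w, rfl⟩
  · rintro ⟨w, rfl⟩
    exact ⟨shift (w + -v) x, ⟨w + -v, rfl⟩, by rw [shift_shift]; ring_nf⟩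

lemma shift_image_closure (v : ℤ × ℤ) (s : Set (Config A)) :
    shift v '' closure s = closure (shift v '' s) :=
  (shiftHomeo (A := A) v).image_closure s

lemma shift_mem_closure_orbit (v : ℤ × ℤ) {x y : Config A} (h : y ∈ closure (orbit x)) :
    shift v y ∈ closure (orbit x) := by
  have : shift v y ∈ shift v '' closure (orbit x) := ⟨y, h, rfl⟩
  rwa [shift_image_closure, shift_image_orbit] at this

/-- If a set is closed and shift-invariant and contains `y`, it contains the orbit closure. -/
lemma closure_orbit_subset {C : Set (Config A)} (hC : IsClosed C)
    (hinv : ∀ v x, x ∈ C → shift v x ∈ C) {y : Config A} (hy : y ∈ C) :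
    closure (orbit y) ⊆ C := by
  apply closure_minimal _ hC
  rintro _ ⟨v, rfl⟩
  exact hinv v y hy

/-- periods iterate -/
lemma shift_nsmul_eq {x : Config A} {v : ℤ × ℤ} (h : shift v x = x) (n : ℕ) :
    shift ((n : ℤ) • v) x = x := by
  induction n with
  | zero => simp
  | succ k ih =>
    have : ((k+1 : ℕ) : ℤ) • v = v + (k : ℤ) • v := by push_cast; module
    rw [this, ← shift_shift, ih, h]

lemma shift_neg_eq {x : Config A} {v : ℤ × ℤ} (h : shift v x = x) : shift (-v) x = x := by
  have := congrArg (shift (-v)) h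
  rw [shift_shift, neg_add_cancel, shift_zero] at this
  exact this.symm

lemma shift_zsmul_eq {x : Config A} {v : ℤ × ℤ} (h : shift v x = x) (n : ℤ) :
    shift (n • v) x = x := by
  rcases le_or_gt 0 n with hn | hn
  · lift n to ℕ using hn; exact_mod_cast shift_nsmul_eq h n
  · obtain ⟨m, hm⟩ : ∃ m : ℕ, n = -(m : ℤ) := ⟨n.natAbs, by omega⟩
    subst hm
    rw [neg_smul]
    exact shift_neg_eq (shift_nsmul_eq h m)

lemma shift_add_period {x : Config A} {v w : ℤ × ℤ} (hv : shift v x = x) (hw : shift w x = x) :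
    shift (v + w) x = x := by rw [← shift_shift, hw, hv]


section Topo
variable {A : Type*} [Fintype A] [Nonempty A] [TopologicalSpace A] [DiscreteTopology A]

lemma tendsto_eventually_eq {x : ℕ → Config A} {z : Config A}
    (h : Tendsto x atTop (𝓝 z)) (w : ℤ × ℤ) : ∀ᶠ j in atTop, x j w = z w := by
  have hw : Tendsto (fun j => x j w) atTop (𝓝 (z w)) :=
    ((continuous_apply w).tendsto z).comp h
  have : {z w} ∈ 𝓝 (z w) := (isOpen_discrete _).mem_nhds rfl
  exact hw.eventually_mem this

lemma tendsto_eventually_eq_finset {x : ℕ → Config A} {z : Config A}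
    (h : Tendsto x atTop (𝓝 z)) (F : Finset (ℤ × ℤ)) :
    ∀ᶠ j in atTop, ∀ w ∈ F, x j w = z w := by
  rw [Filter.eventually_all_finset]
  exact fun w _ => tendsto_eventually_eq h w

lemma isOpen_appearsAt_set (D : Finset (ℤ × ℤ)) (p : ℤ × ℤ → A) (u : ℤ × ℤ) :
    IsOpen {x : Config A | AppearsAt D p x u} := by
  have : {x : Config A | AppearsAt D p x u} = ⋂ d ∈ D, {x : Config A | x (u + d) = p d} := by
    ext x; simp [AppearsAt]
  rw [this]
  refine isOpen_biInter_finset fun d _ => ?_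
  have hc : Continuous (fun x : Config A => x (u + d)) := continuous_apply (u + d)
  exact (isOpen_discrete ({p d} : Set A)).preimage hc

lemma appearsAt_shift {D : Finset (ℤ × ℤ)} {p : ℤ × ℤ → A} {x : Config A} {u v : ℤ × ℤ} :
    AppearsAt D p (shift v x) u ↔ AppearsAt D p x (u + v) := by
  unfold AppearsAt
  constructor <;> intro h d hd
  · have := h d hd; rw [shift_apply] at this; rwa [show u + v + d = u + d + v by ring]
  · rw [shift_apply, show u + d + v = u + v + d by ring]; exact h d hd

/-- The avoidance set of one pattern is closed and shift-invariant. -/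
lemma isClosed_avoid (D : Finset (ℤ × ℤ)) (p : ℤ × ℤ → A) :
    IsClosed {x : Config A | ∀ u, ¬ AppearsAt D p x u} := by
  have : {x : Config A | ∀ u, ¬ AppearsAt D p x u} =
      ⋂ u, {x : Config A | AppearsAt D p x u}ᶜ := by ext x; simp
  rw [this]
  exact isClosed_iInter fun u => (isOpen_appearsAt_set D p u).isClosed_compl

lemma avoid_shift {D : Finset (ℤ × ℤ)} {p : ℤ × ℤ → A} {x : Config A}
    (h : ∀ u, ¬ AppearsAt D p x u) (v : ℤ × ℤ) : ∀ u, ¬ AppearsAt D p (shift v x) u :=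
  fun u hu => h (u + v) (appearsAt_shift.mp hu)

/-- Compactness: subsequence limits of sequences of configurations. -/
lemma exists_subseq_tendsto (x : ℕ → Config A) :
    ∃ z : Config A, ∃ φ : ℕ → ℕ, StrictMono φ ∧ Tendsto (x ∘ φ) atTop (𝓝 z) := by
  obtain ⟨z, _, φ, hφ, hlim⟩ := isCompact_univ.tendsto_subseq (x := x) (fun n => Set.mem_univ _)
  exact ⟨z, φ, hφ, hlim⟩

end Topo

section Minimal
variable {A : Type*} [Fintype A] [Nonempty A] [TopologicalSpace A] [DiscreteTopology A]

/-- A nonempty countable compact subset of configuration space has an isolated point. -/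
lemma exists_isolated {K : Set (Config A)} (hKc : IsCompact K) (hKcount : K.Countable)
    (hKne : K.Nonempty) : ∃ w ∈ K, ∃ U : Set (Config A), IsOpen U ∧ U ∩ K = {w} := by
  haveI : CompactSpace K := isCompact_iff_compactSpace.mp hKc
  haveI : Countable K := hKcount.to_subtype
  haveI : Nonempty K := hKne.to_subtype
  haveI : RegularSpace K := by infer_instance
  haveI : LocallyCompactSpace K := by infer_instance
  haveI : BaireSpace K := by infer_instance
  have hcl : ∀ w : K, IsClosed ({w} : Set K) := fun w => isClosed_singleton
  have hun : ⋃ w : K, ({w} : Set K) = Set.univ := by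
    ext x; simp
  obtain ⟨w, hw⟩ := nonempty_interior_of_iUnion_of_closed hcl hun
  have hopen : IsOpen ({w} : Set K) := by
    have hint : interior ({w} : Set K) = {w} := by
      refine Set.Subset.antisymm interior_subset fun y hy => ?_
      simp only [Set.mem_singleton_iff] at hy
      subst hy
      obtain ⟨x, hx⟩ := hw
      have hxw : x ∈ ({y} : Set K) := interior_subset hx
      rw [Set.mem_singleton_iff] at hxw
      rwa [hxw] at hx
    rw [← hint]; exact isOpen_interior
  rw [isOpen_induced_iff] at hopen
  obtain ⟨U, hU, hUw⟩ := hopen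
  refine ⟨w.1, w.2, U, hU, ?_⟩
  ext x
  constructor
  · rintro ⟨hxU, hxK⟩
    have : (⟨x, hxK⟩ : K) ∈ Subtype.val ⁻¹' U := hxU
    rw [hUw] at this
    simpa using congrArg Subtype.val this
  · rintro rfl
    have : w ∈ Subtype.val ⁻¹' U := by rw [hUw]; rfl
    exact ⟨this, w.2⟩

/-- A `Preceq`-minimal configuration of a countable closed invariant set is doubly periodic. -/
lemma level0_periodic {X : Set (Config A)} (hXclosed : IsClosed X)
    (hXinv : ∀ v x, x ∈ X → shift v x ∈ X) (hcount : X.Countable)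
    {z : Config A} (hz : z ∈ X) (hmin : ∀ y ∈ X, Preceq y z → Preceq z y) :
    ∃ N : ℕ, 0 < N ∧ shift ((N : ℤ), 0) z = z ∧ shift (0, (N : ℤ)) z = z := by
  set W := closure (orbit z) with hW
  have hWX : W ⊆ X := closure_orbit_subset hXclosed hXinv hz
  have hWclosed : IsClosed W := isClosed_closure
  have hWc : IsCompact W := hWclosed.isCompact
  have hWcount : W.Countable := hcount.mono hWX
  have hzW : z ∈ W := subset_closure (mem_orbit_self z)
  have hWinv : ∀ v, shift v '' W = W := by
    intro v
    rw [hW, shift_image_closure, shift_image_orbit]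
  have hWinv' : ∀ v x, x ∈ W → shift v x ∈ W := by
    intro v x hx
    rw [← hWinv v]; exact ⟨x, hx, rfl⟩
  obtain ⟨w, hwW, U, hU, hUW⟩ := exists_isolated hWc hWcount ⟨z, hzW⟩
  -- w is in the orbit of z
  have hworb : w ∈ orbit z := by
    have hwz : w ∈ closure (orbit z) := hwW
    rw [mem_closure_iff] at hwz
    obtain ⟨y, hyU, hyorb⟩ := hwz U hU (by
      have : w ∈ U ∩ W := by rw [hUW]; rfl
      exact this.1)
    have : y ∈ U ∩ W := ⟨hyU, subset_closure hyorb⟩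
    rw [hUW] at this
    rwa [← this]
  obtain ⟨a, haw0⟩ := hworb
  have haw : shift a z = w := haw0
  -- every point of the orbit of z is isolated in W
  have hiso : ∀ b : ℤ × ℤ, ∃ V : Set (Config A), IsOpen V ∧ V ∩ W = {shift b z} := by
    intro b
    refine ⟨shift (a - b) ⁻¹' U, hU.preimage (continuous_shift _), ?_⟩
    ext x
    constructor
    · rintro ⟨hxU, hxW⟩
      have h1 : shift (a - b) x ∈ U ∩ W := ⟨hxU, hWinv' _ _ hxW⟩
      rw [hUW, Set.mem_singleton_iff] at h1
      have h2 := congrArg (shift (b - a)) h1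
      rw [shift_shift, ← haw, shift_shift] at h2
      simpa using h2
    · rintro rfl
      constructor
      · show shift (a - b) (shift b z) ∈ U
        rw [shift_shift]
        have : a - b + b = a := by ring
        rw [this]
        rw [haw]
        have : w ∈ U ∩ W := by rw [hUW]; rfl
        exact this.1
      · exact hWinv' b z hzW
  choose V hVopen hVW using hiso
  -- the orbit is open in W, so W \ orbit z is closed
  have horbW : orbit z ⊆ W := fun x hx => subset_closure hx
  have hVun : (⋃ b, V b) ∩ W = orbit z := by
    ext x
    constructor
    · rintro ⟨hxV, hxW⟩
      obtain ⟨b, hb⟩ := Set.mem_iUnion.mp hxV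
      have : x ∈ V b ∩ W := ⟨hb, hxW⟩
      rw [hVW b] at this
      rw [this]; exact shift_mem_orbit b z
    · rintro ⟨b, rfl⟩
      refine ⟨Set.mem_iUnion.mpr ⟨b, ?_⟩, horbW (shift_mem_orbit b z)⟩
      have : shift b z ∈ V b ∩ W := by rw [hVW b]; rfl
      exact this.1
  -- W = orbit z
  have hWeq : W = orbit z := by
    apply Set.Subset.antisymm _ horbW
    by_contra hns
    obtain ⟨y, hyW, hyno⟩ : ∃ y, y ∈ W ∧ y ∉ orbit z := by
      rcases Set.not_subset.mp hns with ⟨y, hyW, hyno⟩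
      exact ⟨y, hyW, hyno⟩
    have hWdiff_closed : IsClosed (W \ (⋃ b, V b)) :=
      hWclosed.sdiff (isOpen_iUnion hVopen)
    have hWdiff_inv : ∀ v x, x ∈ W \ (⋃ b, V b) → shift v x ∈ W \ (⋃ b, V b) := by
      rintro v x ⟨hxW, hxV⟩
      refine ⟨hWinv' v x hxW, fun hmem => ?_⟩
      have : shift v x ∈ orbit z := by
        rw [← hVun]; exact ⟨hmem, hWinv' v x hxW⟩
      obtain ⟨b, hb⟩ := this
      apply hxV
      have hxorb : x ∈ orbit z := by
        have := congrArg (shift (-v)) hb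
        rw [shift_shift, shift_shift, neg_add_cancel, shift_zero] at this
        rw [← this]; exact shift_mem_orbit _ z
      rw [← hVun] at hxorb
      exact hxorb.1
    have hymem : y ∈ W \ (⋃ b, V b) := by
      refine ⟨hyW, fun hmem => hyno ?_⟩
      rw [← hVun]; exact ⟨hmem, hyW⟩
    have hzy : Preceq z y := hmin y (hWX hyW) hyW
    have : z ∈ W \ (⋃ b, V b) :=
      closure_orbit_subset hWdiff_closed hWdiff_inv hymem hzy
    have hzorb : z ∈ orbit z := mem_orbit_self z
    rw [← hVun] at hzorb
    exact this.2 hzorb.1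
  -- W is finite by compactness
  have hWfin : W.Finite := by
    have hcover : W ⊆ ⋃ b, V b := by
      intro x hxW
      rw [hWeq] at hxW
      rw [← hVun] at hxW
      exact hxW.1
    obtain ⟨F, hF⟩ := hWc.elim_finite_subcover V hVopen hcover
    have : W ⊆ ⋃ b ∈ F, ({shift b z} : Set (Config A)) := by
      intro x hxW
      have hx2 := hF hxW
      rw [Set.mem_iUnion₂] at hx2
      obtain ⟨b, hbF, hb⟩ := hx2
      have : x ∈ V b ∩ W := ⟨hb, hxW⟩
      rw [hVW b] at this
      simp only [Set.mem_iUnion]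
      exact ⟨b, hbF, this⟩

    exact (F.finite_toSet.biUnion fun b _ => Set.finite_singleton _).subset this
  -- extract horizontal and vertical periods
  have key : ∀ t : ℤ × ℤ, t ≠ 0 → ∃ m : ℕ, 0 < m ∧ shift ((m : ℤ) • t) z = z := by
    intro t ht
    haveI : Finite (orbit z) := by rw [← hWeq]; exact hWfin
    obtain ⟨k, l, hkl, heq⟩ := Finite.exists_ne_map_eq_of_infinite
      (fun n : ℕ => (⟨shift ((n : ℤ) • t) z, shift_mem_orbit _ z⟩ : orbit z))
    have heq' : shift ((k : ℤ) • t) z = shift ((l : ℤ) • t) z := congrArg Subtype.val heq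
    rcases Nat.lt_or_ge k l with h | h
    · refine ⟨l - k, by omega, ?_⟩
      have := congrArg (shift (-((k : ℤ) • t))) heq'
      rw [shift_shift, shift_shift, neg_add_cancel, shift_zero] at this
      have harith : -((k : ℤ) • t) + (l : ℤ) • t = ((l - k : ℕ) : ℤ) • t := by
        push_cast [Nat.cast_sub (le_of_lt h)]
        module
      rw [harith] at this
      exact this.symm
    · have hlk : l < k := by omega
      refine ⟨k - l, by omega, ?_⟩
      have := congrArg (shift (-((l : ℤ) • t))) heq'
      rw [shift_shift, shift_shift, neg_add_cancel, shift_zero] at this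
      have harith : -((l : ℤ) • t) + (k : ℤ) • t = ((k - l : ℕ) : ℤ) • t := by
        push_cast [Nat.cast_sub (le_of_lt hlk)]
        module
      rw [harith] at this
      exact this
  obtain ⟨m1, hm1, hper1⟩ := key (1, 0) (by simp)
  obtain ⟨m2, hm2, hper2⟩ := key (0, 1) (by simp)
  refine ⟨m1 * m2, Nat.mul_pos hm1 hm2, ?_, ?_⟩
  · have h := shift_zsmul_eq hper1 (m2 : ℤ)
    have harith : ((m2 : ℤ) • ((m1 : ℤ) • ((1 : ℤ), (0 : ℤ)))) = (((m1 * m2 : ℕ) : ℤ), (0 : ℤ)) := by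
      apply Prod.ext <;> simp [smul_eq_mul] <;> push_cast <;> ring
    rwa [harith] at h
  · have h := shift_zsmul_eq hper2 (m1 : ℤ)
    have harith : ((m1 : ℤ) • ((m2 : ℤ) • ((0 : ℤ), (1 : ℤ)))) = ((0 : ℤ), ((m1 * m2 : ℕ) : ℤ)) := by
      apply Prod.ext <;> simp [smul_eq_mul] <;> push_cast <;> ring
    rwa [harith] at h

end Minimal

section LemB
variable {A : Type*} [Fintype A] [Nonempty A] [TopologicalSpace A] [DiscreteTopology A]

lemma nrm_add_le (a b : ℤ × ℤ) : nrm (a + b) ≤ nrm a + nrm b := by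
  simp only [nrm, Prod.fst_add, Prod.snd_add]
  omega

lemma inj_tendsto_atTop {g : ℕ → ℕ} (hg : Function.Injective g) : Tendsto g atTop atTop := by
  rw [tendsto_atTop]
  intro b
  have hfin : {n : ℕ | g n < b}.Finite := by
    have : {n : ℕ | g n < b} = g ⁻¹' (Set.Iio b) := rfl
    rw [this]
    exact (Set.finite_Iio b).preimage hg.injOn
  have := hfin.eventually_cofinite_notMem
  rw [Nat.cofinite_eq_atTop] at this
  filter_upwards [this] with n hn
  simp only [Set.mem_setOf_eq, not_lt] at hn
  exact hn

lemma all_periodic_finite {Z : Set (Config A)} (hZc : IsClosed Z)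
    (hZinv : ∀ v z, z ∈ Z → shift v z ∈ Z)
    (hper : ∀ z ∈ Z, ∃ N : ℕ, 0 < N ∧ shift ((N : ℤ), 0) z = z ∧ shift (0, (N : ℤ)) z = z) :
    Z.Finite := by
  by_contra hinf
  have hZinf : Z.Infinite := hinf
  set g := hZinf.natEmbedding with hg
  obtain ⟨zs, φ0, hφ0, hlim0⟩ := exists_subseq_tendsto (fun j => ((g j : Z) : Config A))
  have hzsZ : zs ∈ Z := hZc.mem_of_tendsto hlim0 (Filter.Eventually.of_forall fun j => (g (φ0 j)).2)
  have hginj : Function.Injective (fun j => ((g (φ0 j) : Z) : Config A)) := by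
    intro i j hij
    exact hφ0.injective (g.injective (Subtype.coe_injective hij))
  obtain ⟨y, hyZ, hyne, hylim⟩ : ∃ y : ℕ → Config A,
      (∀ j, y j ∈ Z) ∧ (∀ j, y j ≠ zs) ∧ Tendsto y atTop (𝓝 zs) := by
    by_cases hex : ∃ j0, ((g (φ0 j0) : Z) : Config A) = zs
    · obtain ⟨j0, hj0⟩ := hex
      refine ⟨fun j => ((g (φ0 (j + (j0 + 1))) : Z) : Config A),
        fun j => (g (φ0 (j + (j0 + 1)))).2, fun j hj => ?_, ?_⟩
      · have : j + (j0 + 1) = j0 := hginj (hj.trans hj0.symm)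
        omega
      · exact hlim0.comp (tendsto_add_atTop_nat (j0 + 1))
    · push_neg at hex
      exact ⟨_, fun j => (g (φ0 j)).2, hex, hlim0⟩
  -- minimal-norm difference points
  have hdiff : ∀ j, ∃ w, y j w ≠ zs w := by
    intro j
    by_contra h
    push_neg at h
    exact hyne j (funext h)
  set md : ℕ → ℕ := fun j => sInf {n : ℕ | ∃ w, nrm w = n ∧ y j w ≠ zs w} with hmd
  have hdmem : ∀ j, md j ∈ {n : ℕ | ∃ w, nrm w = n ∧ y j w ≠ zs w} := by
    intro j
    apply Nat.sInf_mem
    obtain ⟨w, hw⟩ := hdiff j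
    exact ⟨nrm w, w, rfl, hw⟩
  choose d hd1 hd2 using fun j => (hdmem j)
  have hminim : ∀ j w, nrm w < md j → y j w = zs w := by
    intro j w hw
    by_contra hne'
    have hle : md j ≤ nrm w :=
      Nat.sInf_le (show nrm w ∈ {n : ℕ | ∃ w', nrm w' = n ∧ y j w' ≠ zs w'} from ⟨w, rfl, hne'⟩)
    omega
  have hmdtop : Tendsto md atTop atTop := by
    rw [tendsto_atTop]
    intro b
    filter_upwards [tendsto_eventually_eq_finset hylim (finite_ball b).toFinset] with j hj
    by_contra hlt
    push_neg at hlt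
    refine hd2 j (hj _ ?_)
    rw [Set.Finite.mem_toFinset, Set.mem_setOf_eq, hd1 j]
    omega
  -- pigeonhole on the signs of the difference points
  obtain ⟨ε, hε⟩ := Finite.exists_infinite_fiber
    (fun j => ((decide (0 ≤ (d j).1), decide (0 ≤ (d j).2)) : Bool × Bool))
  have hfibinf : {j | ((decide (0 ≤ (d j).1), decide (0 ≤ (d j).2)) : Bool × Bool) = ε}.Infinite := by
    rw [← Set.infinite_coe_iff] at *
    exact hε
  set g1 := hfibinf.natEmbedding with hg1
  set ι : ℕ → ℕ := fun i => (g1 i : ℕ) with hι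
  have hιinj : Function.Injective ι := fun i j hij => g1.injective (Subtype.coe_injective hij)
  have hιtop : Tendsto ι atTop atTop := inj_tendsto_atTop hιinj
  have hsgn : ∀ i, (decide (0 ≤ (d (ι i)).1) = ε.1) ∧ (decide (0 ≤ (d (ι i)).2) = ε.2) := by
    intro i
    have := (g1 i).2
    simp only [Set.mem_setOf_eq, Prod.ext_iff] at this
    exact this
  obtain ⟨wL, φ1, hφ1, hlimw⟩ := exists_subseq_tendsto (fun i => shift (d (ι i)) (y (ι i)))
  obtain ⟨yL, φ2, hφ2, hlimy⟩ := exists_subseq_tendsto (fun i => shift (d (ι (φ1 i))) zs)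
  set h : ℕ → ℕ := fun i => ι (φ1 (φ2 i)) with hh
  have hlimw' : Tendsto (fun i => shift (d (h i)) (y (h i))) atTop (𝓝 wL) :=
    hlimw.comp hφ2.tendsto_atTop
  have hlimy' : Tendsto (fun i => shift (d (h i)) zs) atTop (𝓝 yL) := hlimy
  have hwLZ : wL ∈ Z := hZc.mem_of_tendsto hlimw'
    (Filter.Eventually.of_forall fun i => hZinv _ _ (hyZ _))
  have hyLZ : yL ∈ Z := hZc.mem_of_tendsto hlimy'
    (Filter.Eventually.of_forall fun i => hZinv _ _ hzsZ)
  have hhtop : Tendsto h atTop atTop := hιtop.comp (hφ1.tendsto_atTop.comp hφ2.tendsto_atTop)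
  -- wL and yL differ at the origin
  have hne0 : wL 0 ≠ yL 0 := by
    obtain ⟨i, hi1, hi2⟩ := ((tendsto_eventually_eq hlimw' 0).and
      (tendsto_eventually_eq hlimy' 0)).exists
    rw [← hi1, ← hi2]
    simp only [shift_apply, zero_add]
    exact hd2 (h i)
  -- wL and yL agree on the quadrant opposite to the sign pattern ε
  have hQ : ∀ s : ℤ × ℤ,
      ((if ε.1 then s.1 < 0 else 0 < s.1) ∧ (if ε.2 then s.2 < 0 else 0 < s.2)) →
      wL s = yL s := by
    intro s hs
    obtain ⟨i, ⟨hi1, hi2⟩, hi3⟩ := (((tendsto_eventually_eq hlimw' s).and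
      (tendsto_eventually_eq hlimy' s)).and
      ((hmdtop.comp hhtop).eventually_ge_atTop (nrm s + 1))).exists
    simp only [Function.comp_apply] at hi3
    rw [← hi1, ← hi2]
    simp only [shift_apply]
    have hsx := (hsgn (φ1 (φ2 i))).1
    have hsy := (hsgn (φ1 (φ2 i))).2
    have hdh : d (ι (φ1 (φ2 i))) = d (h i) := rfl
    rw [hdh] at hsx hsy
    have hx : (0 ≤ (d (h i)).1 ∧ s.1 < 0) ∨ ((d (h i)).1 < 0 ∧ 0 < s.1) := by
      cases hb : ε.1 with
      | false =>
        rw [hb] at hsx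
        rw [hb] at hs
        refine Or.inr ⟨?_, hs.1⟩
        have := of_decide_eq_false hsx
        omega
      | true =>
        rw [hb] at hsx
        rw [hb] at hs
        exact Or.inl ⟨of_decide_eq_true hsx, hs.1⟩
    have hy' : (0 ≤ (d (h i)).2 ∧ s.2 < 0) ∨ ((d (h i)).2 < 0 ∧ 0 < s.2) := by
      cases hb : ε.2 with
      | false =>
        rw [hb] at hsy
        rw [hb] at hs
        refine Or.inr ⟨?_, hs.2⟩
        have := of_decide_eq_false hsy
        omega
      | true =>
        rw [hb] at hsy
        rw [hb] at hs
        exact Or.inl ⟨of_decide_eq_true hsy, hs.2⟩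
    have ha1 : (d (h i)).1.natAbs ≤ md (h i) := by
      rw [← hd1]
      simp [nrm]
    have ha2 : (d (h i)).2.natAbs ≤ md (h i) := by
      rw [← hd1]
      simp [nrm]
    have hs1 : s.1.natAbs ≤ nrm s := by simp [nrm]
    have hs2 : s.2.natAbs ≤ nrm s := by simp [nrm]
    apply hminim
    simp only [nrm, Prod.fst_add, Prod.snd_add]
    omega
  -- wL and yL are doubly periodic, and agree on a quadrant, hence are equal
  obtain ⟨Nw, hNwpos, hNw1, hNw2⟩ := hper wL hwLZ
  obtain ⟨Ny, hNypos, hNy1, hNy2⟩ := hper yL hyLZ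
  set M : ℤ := ((Nw * Ny : ℕ) : ℤ) with hM
  have hM1 : 1 ≤ M := by
    have : 0 < Nw * Ny := Nat.mul_pos hNwpos hNypos
    omega
  have hpair : ∀ a b c d' : ℤ, a = c → b = d' → ((a, b) : ℤ × ℤ) = (c, d') := by
    intro a b c d' h1 h2; rw [h1, h2]
  have hwM1 : shift (M, 0) wL = wL := by
    have h' := shift_zsmul_eq hNw1 (Ny : ℤ)
    have hv : ((Ny : ℤ) • (((Nw : ℕ) : ℤ), (0 : ℤ))) = (M, 0) := by
      show ((Ny : ℤ) * (Nw : ℤ), (Ny : ℤ) * 0) = (M, 0)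
      refine hpair _ _ _ _ ?_ (by ring)
      rw [hM]; push_cast; ring
    rwa [hv] at h'
  have hwM2 : shift (0, M) wL = wL := by
    have h' := shift_zsmul_eq hNw2 (Ny : ℤ)
    have hv : ((Ny : ℤ) • ((0 : ℤ), ((Nw : ℕ) : ℤ))) = (0, M) := by
      show ((Ny : ℤ) * 0, (Ny : ℤ) * (Nw : ℤ)) = (0, M)
      refine hpair _ _ _ _ (by ring) ?_
      rw [hM]; push_cast; ring
    rwa [hv] at h'
  have hyM1 : shift (M, 0) yL = yL := by
    have h' := shift_zsmul_eq hNy1 (Nw : ℤ)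
    have hv : ((Nw : ℤ) • (((Ny : ℕ) : ℤ), (0 : ℤ))) = (M, 0) := by
      show ((Nw : ℤ) * (Ny : ℤ), (Nw : ℤ) * 0) = (M, 0)
      refine hpair _ _ _ _ ?_ (by ring)
      rw [hM]; push_cast; ring
    rwa [hv] at h'
  have hyM2 : shift (0, M) yL = yL := by
    have h' := shift_zsmul_eq hNy2 (Nw : ℤ)
    have hv : ((Nw : ℤ) • ((0 : ℤ), ((Ny : ℕ) : ℤ))) = (0, M) := by
      show ((Nw : ℤ) * 0, (Nw : ℤ) * (Ny : ℤ)) = (0, M)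
      refine hpair _ _ _ _ (by ring) ?_
      rw [hM]; push_cast; ring
    rwa [hv] at h'
  have hperiodM : ∀ (x : Config A), shift (M, 0) x = x → shift (0, M) x = x →
      ∀ (t : ℤ × ℤ) (k1 k2 : ℤ), x (t + (M * k1, M * k2)) = x t := by
    intro x hx1 hx2 t k1 k2
    have hsh : shift (M * k1, M * k2) x = x := by
      have h1 := shift_zsmul_eq hx1 k1
      have h2 := shift_zsmul_eq hx2 k2
      have h3 := shift_add_period h1 h2
      have hv : (k1 • ((M : ℤ), (0 : ℤ)) + k2 • ((0 : ℤ), (M : ℤ))) = (M * k1, M * k2) := by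
        apply Prod.ext <;> simp [smul_eq_mul] <;> ring
      rwa [hv] at h3
    calc x (t + (M * k1, M * k2)) = shift (M * k1, M * k2) x t := rfl
    _ = x t := by rw [hsh]
  have hag : ∀ t : ℤ × ℤ, wL t = yL t := by
    intro t
    have hk1 : ∃ k1 : ℤ, (if ε.1 then t.1 + M * k1 < 0 else 0 < t.1 + M * k1) := by
      have hMk : ((t.1.natAbs : ℤ) + 1) ≤ M * ((t.1.natAbs : ℤ) + 1) :=
        le_mul_of_one_le_left (by positivity) hM1
      set P : ℤ := M * ((t.1.natAbs : ℤ) + 1) with hP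
      cases hb : ε.1 with
      | false =>
        refine ⟨(t.1.natAbs : ℤ) + 1, ?_⟩
        simp only [Bool.false_eq_true, if_false]
        omega
      | true =>
        refine ⟨-((t.1.natAbs : ℤ) + 1), ?_⟩
        simp only [if_true]
        have hPP : M * -((t.1.natAbs : ℤ) + 1) = -P := by rw [hP]; ring
        rw [hPP]
        omega
    have hk2 : ∃ k2 : ℤ, (if ε.2 then t.2 + M * k2 < 0 else 0 < t.2 + M * k2) := by
      have hMk : ((t.2.natAbs : ℤ) + 1) ≤ M * ((t.2.natAbs : ℤ) + 1) :=
        le_mul_of_one_le_left (by positivity) hM1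
      set P : ℤ := M * ((t.2.natAbs : ℤ) + 1) with hP
      cases hb : ε.2 with
      | false =>
        refine ⟨(t.2.natAbs : ℤ) + 1, ?_⟩
        simp only [Bool.false_eq_true, if_false]
        omega
      | true =>
        refine ⟨-((t.2.natAbs : ℤ) + 1), ?_⟩
        simp only [if_true]
        have hPP : M * -((t.2.natAbs : ℤ) + 1) = -P := by rw [hP]; ring
        rw [hPP]
        omega
    obtain ⟨k1, hk1⟩ := hk1
    obtain ⟨k2, hk2⟩ := hk2
    have hscond : (if ε.1 then (t + (M * k1, M * k2)).1 < 0 else 0 < (t + (M * k1, M * k2)).1) ∧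
        (if ε.2 then (t + (M * k1, M * k2)).2 < 0 else 0 < (t + (M * k1, M * k2)).2) := by
      constructor
      · simpa [Prod.fst_add] using hk1
      · simpa [Prod.snd_add] using hk2
    have h1 := hQ _ hscond
    have h2 := hperiodM wL hwM1 hwM2 t k1 k2
    have h3 := hperiodM yL hyM1 hyM2 t k1 k2
    rw [← h2, ← h3]
    exact h1
  exact hne0 (hag 0)

end LemB

section Escape
variable {A : Type*} [Fintype A] [Nonempty A] [TopologicalSpace A] [DiscreteTopology A]

/-- Limits of shifts of `c` along positions escaping to infinity avoid every pattern of `c`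
which appears only finitely often. -/
lemma escape_limit (c : Config A) (Dq : Finset (ℤ × ℤ)) (q : ℤ × ℤ → A)
    (hS : {u' : ℤ × ℤ | AppearsAt Dq q c u'}.Finite)
    (v : ℕ → ℤ × ℤ) (hv : Tendsto (fun n => nrm (v n)) atTop atTop) :
    ∃ (z : Config A) (φ : ℕ → ℕ), StrictMono φ ∧
      Tendsto (fun j => shift (v (φ j)) c) atTop (𝓝 z) ∧
      z ∈ closure (orbit c) ∧ ∀ w, ¬ AppearsAt Dq q z w := by
  obtain ⟨z, φ, hφ, hlim⟩ := exists_subseq_tendsto (fun n => shift (v n) c)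
  refine ⟨z, φ, hφ, hlim, ?_, ?_⟩
  · exact isClosed_closure.mem_of_tendsto hlim
      (Filter.Eventually.of_forall fun j => subset_closure (shift_mem_orbit _ c))
  · intro w hw
    obtain ⟨K, hK⟩ := exists_nrm_bound hS
    have hev1 := tendsto_eventually_eq_finset hlim (Dq.image (fun d => w + d))
    have hev2 := (hv.comp hφ.tendsto_atTop).eventually_ge_atTop (K + nrm w + 1)
    obtain ⟨j, hj1, hj2⟩ := (hev1.and hev2).exists
    simp only [Function.comp_apply] at hj2
    have happ : AppearsAt Dq q c (w + v (φ j)) := by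
      intro d hd
      have h1 : shift (v (φ j)) c (w + d) = z (w + d) :=
        hj1 _ (Finset.mem_image_of_mem _ hd)
      have h2 : z (w + d) = q d := hw d hd
      rw [shift_apply] at h1
      rw [show w + v (φ j) + d = w + d + v (φ j) by ring]
      rw [h1, h2]
    have hmem : w + v (φ j) ∈ {u' : ℤ × ℤ | AppearsAt Dq q c u'} := happ
    have hb := hK _ hmem
    have htri : nrm (v (φ j)) ≤ nrm (w + v (φ j)) + nrm w := by
      have := nrm_add_le (w + v (φ j)) (-w)
      simp only [add_neg_cancel_comm] at this
      have hnw : nrm (-w) = nrm w := by simp [nrm]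
      omega
    omega

end Escape

section Background
variable {A : Type*} [Fintype A] [Nonempty A] [TopologicalSpace A] [DiscreteTopology A]

/-- The eventually-periodic background of `c`: lift every point vertically above height `N`. -/
def ebg (c : Config A) (T : ℤ) (N : ℕ) : Config A :=
  fun w => c (w.1, w.2 + T * (((N : ℤ) + 1 - w.2).toNat : ℤ))

variable {c : Config A} {T : ℤ} {N : ℕ}

/-- hypothesis packaging: `c` is `T`-periodic outside the `N`-box. -/
def EvPer (c : Config A) (T : ℤ) (N : ℕ) : Prop :=
  ∀ w : ℤ × ℤ, N < nrm w → c (w + (0, T)) = c w ∧ c (w + (T, 0)) = c w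

lemma EvPer.step_v (h : EvPer c T N) {a b : ℤ} (hb : (N : ℤ) < b) :
    c (a, b + T) = c (a, b) := by
  have := (h (a, b) (by simp [nrm]; omega)).1
  simpa using this

lemma EvPer.step_v' (h : EvPer c T N) {a b : ℤ} (ha : (N : ℤ) < a ∨ a < -(N : ℤ)) :
    c (a, b + T) = c (a, b) := by
  have := (h (a, b) (by simp [nrm]; omega)).1
  simpa using this

lemma EvPer.step_h (h : EvPer c T N) {a b : ℤ} (hb : (N : ℤ) < b ∨ b < -(N : ℤ)) :
    c (a + T, b) = c (a, b) := by
  have := (h (a, b) (by simp [nrm]; omega)).2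
  simpa using this

lemma EvPer.climb (h : EvPer c T N) (hT : 1 ≤ T) {a b : ℤ} (hb : (N : ℤ) < b) (m : ℕ) :
    c (a, b + T * m) = c (a, b) := by
  induction m with
  | zero => simp
  | succ k ih =>
    have harith : b + T * ((k : ℤ) + 1) = (b + T * k) + T := by ring
    push_cast
    rw [harith, h.step_v (by nlinarith), ih]

lemma EvPer.climb' (h : EvPer c T N) (hT : 1 ≤ T) {a b : ℤ}
    (ha : (N : ℤ) < a ∨ a < -(N : ℤ)) (m : ℕ) :
    c (a, b + T * m) = c (a, b) := by
  induction m with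
  | zero => simp
  | succ k ih =>
    have harith : b + T * ((k : ℤ) + 1) = (b + T * k) + T := by ring
    push_cast
    rw [harith, h.step_v' ha, ih]

lemma EvPer.climb_h (h : EvPer c T N) (hT : 1 ≤ T) {a b : ℤ}
    (hb : (N : ℤ) < b ∨ b < -(N : ℤ)) (m : ℕ) :
    c (a + T * m, b) = c (a, b) := by
  induction m with
  | zero => simp
  | succ k ih =>
    have harith : a + T * ((k : ℤ) + 1) = (a + T * k) + T := by ring
    push_cast
    rw [harith, h.step_h hb, ih]

lemma ebg_height (hT : 1 ≤ T) (w : ℤ × ℤ) :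
    (N : ℤ) < w.2 + T * (((N : ℤ) + 1 - w.2).toNat : ℤ) := by
  rcases le_or_gt w.2 (N : ℤ) with hb | hb
  · have h1 : (((N : ℤ) + 1 - w.2).toNat : ℤ) = (N : ℤ) + 1 - w.2 :=
      Int.toNat_of_nonneg (by omega)
    rw [h1]
    nlinarith
  · have h1 : (((N : ℤ) + 1 - w.2).toNat : ℤ) = 0 := by
      rw [Int.toNat_eq_zero.mpr (by omega)]; rfl
    rw [h1]
    omega

/-- The value of the background can be computed from any valid lift. -/
lemma ebg_eq (h : EvPer c T N) (hT : 1 ≤ T) (w : ℤ × ℤ) {k : ℤ} (hk : 0 ≤ k)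
    (hh : (N : ℤ) < w.2 + T * k) :
    ebg c T N w = c (w.1, w.2 + T * k) := by
  unfold ebg
  set k0 : ℤ := (((N : ℤ) + 1 - w.2).toNat : ℤ) with hk0
  have hh0 : (N : ℤ) < w.2 + T * k0 := ebg_height hT w
  rcases le_total k k0 with hle | hle
  · have : w.2 + T * k0 = (w.2 + T * k) + T * (((k0 - k).toNat : ℤ)) := by
      rw [Int.toNat_of_nonneg (by omega)]; ring
    rw [this, h.climb hT hh]
  · have : w.2 + T * k = (w.2 + T * k0) + T * (((k - k0).toNat : ℤ)) := by
      rw [Int.toNat_of_nonneg (by omega)]; ring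
    rw [this, h.climb hT hh0]

lemma ebg_per_v (h : EvPer c T N) (hT : 1 ≤ T) : shift (0, T) (ebg c T N) = ebg c T N := by
  funext w
  rw [shift_apply]
  have hk0 : (0 : ℤ) ≤ (((N : ℤ) + 1 - w.2).toNat : ℤ) + 1 := by positivity
  have hh : (N : ℤ) < (w + (0, T)).2 + T * ((((N : ℤ) + 1 - w.2).toNat : ℤ)) := by
    have := ebg_height (N := N) hT w
    simp only [Prod.snd_add]
    nlinarith
  have h1 : ebg c T N (w + (0, T)) = c ((w + (0, T)).1, (w + (0, T)).2 + T * ((((N : ℤ) + 1 - w.2).toNat : ℤ))) :=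
    ebg_eq h hT _ (by positivity) hh
  have h2 : ebg c T N w = c (w.1, w.2 + T * ((((N : ℤ) + 1 - w.2).toNat : ℤ) + 1)) :=
    ebg_eq h hT _ hk0 (by have := ebg_height (N := N) hT w; nlinarith)
  rw [h1, h2]
  congr 1
  apply Prod.ext
  · simp
  · simp only [Prod.snd_add]
    ring

lemma ebg_per_h (h : EvPer c T N) (hT : 1 ≤ T) : shift (T, 0) (ebg c T N) = ebg c T N := by
  funext w
  rw [shift_apply]
  have hh := ebg_height (N := N) (T := T) hT w
  have h1 : ebg c T N (w + (T, 0)) = c ((w + (T, 0)).1, (w + (T, 0)).2 + T * ((((N : ℤ) + 1 - w.2).toNat : ℤ))) := by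
    apply ebg_eq h hT _ (by positivity)
    simp only [Prod.snd_add]
    omega
  rw [h1]
  have h2 : ((w + (T, 0)).1, (w + (T, 0)).2 + T * ((((N : ℤ) + 1 - w.2).toNat : ℤ))) =
      ((w.1 + T), (w.2 + T * ((((N : ℤ) + 1 - w.2).toNat : ℤ)))) := by
    apply Prod.ext <;> simp
  rw [h2]
  rw [show ((w.1 + T : ℤ), (w.2 + T * ((((N : ℤ) + 1 - w.2).toNat : ℤ)) : ℤ)) =
    ((w.1 : ℤ), (w.2 + T * ((((N : ℤ) + 1 - w.2).toNat : ℤ)) : ℤ)) + ((T : ℤ), (0 : ℤ)) by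
      apply Prod.ext <;> simp]
  have := (h ((w.1, w.2 + T * ((((N : ℤ) + 1 - w.2).toNat : ℤ)))) (by
    simp only [nrm]
    have : (N : ℤ) < w.2 + T * ((((N : ℤ) + 1 - w.2).toNat : ℤ)) := hh
    simp only [lt_max_iff]  -- N < max |fst| |snd|
    right
    omega)).2
  rw [this]
  rfl

/-- Outside the `N`-box, the background agrees with `c`. -/
lemma ebg_agrees (h : EvPer c T N) (hT : 1 ≤ T) (w : ℤ × ℤ) (hw : N < nrm w) :
    ebg c T N w = c w := by
  have hcase : (N : ℤ) < w.1 ∨ w.1 < -(N : ℤ) ∨ (N : ℤ) < w.2 ∨ w.2 < -(N : ℤ) := by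
    simp only [nrm, lt_max_iff] at hw
    omega
  rcases hcase with h1 | h1 | h1 | h1
  · rw [ebg, h.climb' hT (Or.inl h1)]
  · rw [ebg, h.climb' hT (Or.inr h1)]
  · refine (ebg_eq h hT w le_rfl (k := 0) ?_).trans (by simp)
    simpa using h1
  · -- go horizontally to the right until the first coordinate is large
    have hex : ∃ m : ℕ, (N : ℤ) < w.1 + T * m := by
      refine ⟨N + 1 + w.1.natAbs, ?_⟩
      have h2 : ((N + 1 + w.1.natAbs : ℕ) : ℤ) ≤ T * ((N + 1 + w.1.natAbs : ℕ) : ℤ) :=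
        le_mul_of_one_le_left (by positivity) hT
      have h3 : ((N + 1 + w.1.natAbs : ℕ) : ℤ) = (N : ℤ) + 1 + (w.1.natAbs : ℤ) := by
        push_cast; ring
      rw [h3] at h2 ⊢
      omega
    obtain ⟨m, hm⟩ := hex
    have hc : c w = c (w.1 + T * m, w.2) := by
      have := h.climb_h hT (Or.inr h1) (a := w.1) (b := w.2) m
      rw [this]
    have hebg : ebg c T N w = ebg c T N (w.1 + T * m, w.2) := by
      have hp := ebg_per_h h hT
      -- iterate the horizontal period m times
      have : ∀ (m' : ℕ) (v : ℤ × ℤ), ebg c T N (v.1 + T * m', v.2) = ebg c T N v := by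
        intro m'
        induction m' with
        | zero => intro v; simp
        | succ k ih =>
          intro v
          have h1' : (v.1 + T * ((k : ℕ) + 1 : ℕ), v.2) = ((v.1 + T * k : ℤ), v.2) + (T, 0) := by
            apply Prod.ext <;> simp <;> push_cast <;> ring
          rw [h1']
          have h2' : ebg c T N (((v.1 + T * k : ℤ), v.2) + (T, 0)) =
              shift (T, 0) (ebg c T N) ((v.1 + T * k : ℤ), v.2) := rfl
          rw [h2', hp]
          exact ih v
      exact (this m w).symm
    rw [hebg, hc]
    have hfst : (N : ℤ) < (w.1 + T * m : ℤ) := hm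
    -- first coordinate is now large, reduce to the first case
    have := h.climb' hT (a := w.1 + T * m) (b := w.2) (Or.inl hfst)
    rw [ebg]
    simp only
    rw [this]

end Background

end Aux

theorem stmt10 {A : Type*} [Fintype A] [Nonempty A] [TopologicalSpace A] [DiscreteTopology A]
    (X : Set (Config A)) (hX : IsSFT X) (hcount : X.Countable)
    (c : Config A) (hc : Level1 X c) :
    AllPatternsInfinite c := by
  classical
  obtain ⟨hcX, _, hclev⟩ := hc
  obtain ⟨hXne, n, Dv, pv, hXeq⟩ := hX
  have hcavoid : ∀ (i : Fin n) (u' : ℤ × ℤ), ¬ AppearsAt (Dv i) (pv i) c u' := by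
    rw [hXeq] at hcX; exact hcX
  have hXclosed : IsClosed X := by
    rw [hXeq]
    have hxi : {x : Config A | ∀ (i : Fin n) (u' : ℤ × ℤ), ¬ AppearsAt (Dv i) (pv i) x u'} =
        ⋂ i, {x : Config A | ∀ u', ¬ AppearsAt (Dv i) (pv i) x u'} := by
      ext x; simp
    rw [hxi]
    exact isClosed_iInter fun i => isClosed_avoid _ _
  have hXinv : ∀ (v : ℤ × ℤ) (x : Config A), x ∈ X → shift v x ∈ X := by
    intro v x hx
    rw [hXeq] at hx ⊢
    exact fun i => avoid_shift (hx i) v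
  intro Dq u
  by_contra hfin
  rw [Set.not_infinite] at hfin
  have hSfin : {u' : ℤ × ℤ | AppearsAt Dq (fun d => c (u + d)) c u'}.Finite := hfin
  -- Step 1 : c has no nontrivial vector of periodicity
  have hnoper : ∀ t : ℤ × ℤ, t ≠ 0 → shift t c ≠ c := by
    intro t ht hper
    have hinj : Function.Injective (fun k : ℕ => u + (k : ℤ) • t) := by
      intro a b hab
      have h0 : (a : ℤ) • t = (b : ℤ) • t := by
        have := hab
        simp only at this
        exact add_left_cancel this
      have h1 : (a : ℤ) * t.1 = (b : ℤ) * t.1 := by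
        have := congrArg Prod.fst h0
        simpa [smul_eq_mul] using this
      have h2 : (a : ℤ) * t.2 = (b : ℤ) * t.2 := by
        have := congrArg Prod.snd h0
        simpa [smul_eq_mul] using this
      have ht' : t.1 ≠ 0 ∨ t.2 ≠ 0 := by
        by_contra hcon
        push_neg at hcon
        exact ht (Prod.ext hcon.1 hcon.2)
      rcases ht' with h | h
      · exact_mod_cast mul_right_cancel₀ h h1
      · exact_mod_cast mul_right_cancel₀ h h2
    have hmem : ∀ k : ℕ, (u + (k : ℤ) • t) ∈
        {u' : ℤ × ℤ | ∀ d ∈ Dq, c (u' + d) = c (u + d)} := by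
      intro k d hd
      have hp := shift_zsmul_eq hper (k : ℤ)
      have := congrFun hp (u + d)
      rw [shift_apply] at this
      rw [show u + (k : ℤ) • t + d = u + d + (k : ℤ) • t by abel]
      exact this
    exact (infinite_of_injective_forall_mem hinj hmem) hfin
  -- the set of escape limits avoiding the pattern
  set q : ℤ × ℤ → A := fun d => c (u + d) with hq
  set Zp : Set (Config A) :=
    closure (orbit c) ∩ {x : Config A | ∀ w, ¬ AppearsAt Dq q x w} with hZp
  have hZpc : IsClosed Zp := isClosed_closure.inter (isClosed_avoid Dq q)
  have hZpinv : ∀ v z, z ∈ Zp → shift v z ∈ Zp := by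
    rintro v z ⟨h1, h2⟩
    exact ⟨shift_mem_closure_orbit v h1, avoid_shift h2 v⟩
  have hZpX : Zp ⊆ X := fun z hz =>
    closure_orbit_subset hXclosed hXinv hcX hz.1
  -- every element of Zp is Preceq-minimal in X (level 0), hence doubly periodic
  have hZper : ∀ z ∈ Zp, ∃ Np : ℕ, 0 < Np ∧
      shift ((Np : ℤ), 0) z = z ∧ shift (0, (Np : ℤ)) z = z := by
    intro z hz
    have hprec : Prec z c := by
      refine ⟨hz.1, fun hcz => ?_⟩
      have hsub : closure (orbit z) ⊆ {x : Config A | ∀ w, ¬ AppearsAt Dq q x w} :=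
        closure_orbit_subset (isClosed_avoid Dq q) (fun v x hx => avoid_shift hx v) hz.2
      exact (hsub hcz) u (fun d _ => rfl)
    have hlev0 : Level0 X z := hclev z (hZpX hz) hprec
    exact level0_periodic hXclosed hXinv hcount (hZpX hz) hlev0.2
  have hZfin : Zp.Finite := all_periodic_finite hZpc hZpinv hZper
  -- a common period T for all elements of Zp
  have hZper' : ∀ z : Config A, ∃ Np : ℕ, 0 < Np ∧
      (z ∈ Zp → shift ((Np : ℤ), 0) z = z ∧ shift (0, (Np : ℤ)) z = z) := by
    intro z
    by_cases hz : z ∈ Zp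
    · obtain ⟨Np, h1, h2, h3⟩ := hZper z hz
      exact ⟨Np, h1, fun _ => ⟨h2, h3⟩⟩
    · exact ⟨1, one_pos, fun h => absurd h hz⟩
  choose Nf hNf1 hNf2 using hZper'
  set Tnat : ℕ := ∏ z ∈ hZfin.toFinset, Nf z with hTnat
  have hT0 : 0 < Tnat := Finset.prod_pos fun z _ => hNf1 z
  have hpair : ∀ a b a' b' : ℤ, a = a' → b = b' → ((a, b) : ℤ × ℤ) = (a', b') := by
    intro a b a' b' h1 h2; rw [h1, h2]
  have hZperT : ∀ z ∈ Zp, shift ((Tnat : ℤ), 0) z = z ∧ shift (0, (Tnat : ℤ)) z = z := by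
    intro z hz
    obtain ⟨m, hm⟩ := Finset.dvd_prod_of_mem Nf (hZfin.mem_toFinset.mpr hz)
    constructor
    · have h' := shift_zsmul_eq ((hNf2 z hz).1) (m : ℤ)
      have hv : ((m : ℤ) • (((Nf z : ℕ) : ℤ), (0 : ℤ))) = ((Tnat : ℤ), 0) := by
        show ((m : ℤ) * (Nf z : ℤ), (m : ℤ) * 0) = ((Tnat : ℤ), 0)
        refine hpair _ _ _ _ ?_ (by ring)
        rw [hTnat, hm]
        push_cast
        ring
      rwa [hv] at h'
    · have h' := shift_zsmul_eq ((hNf2 z hz).2) (m : ℤ)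
      have hv : ((m : ℤ) • ((0 : ℤ), ((Nf z : ℕ) : ℤ))) = ((0 : ℤ), (Tnat : ℤ)) := by
        show ((m : ℤ) * 0, (m : ℤ) * (Nf z : ℤ)) = ((0 : ℤ), (Tnat : ℤ))
        refine hpair _ _ _ _ (by ring) ?_
        rw [hTnat, hm]
        push_cast
        ring
      rwa [hv] at h'
  set TT : ℤ := (Tnat : ℤ) with hTT
  have hT1 : 1 ≤ TT := by omega
  -- Step 5 : c is eventually periodic
  have hbad : ∀ t : ℤ × ℤ, (∀ z ∈ Zp, shift t z = z) →
      {w : ℤ × ℤ | c (w + t) ≠ c w}.Finite := by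
    intro t ht
    by_contra hinf
    have hBinf : {w : ℤ × ℤ | c (w + t) ≠ c w}.Infinite := hinf
    have hsel : ∀ m : ℕ, ∃ w : ℤ × ℤ, c (w + t) ≠ c w ∧ m < nrm w := by
      intro m
      by_contra hno
      push_neg at hno
      exact hBinf ((finite_ball m).subset fun w hw => hno w hw)
    choose wseq hw1 hw2 using hsel
    have hwtop : Tendsto (fun m => nrm (wseq m)) atTop atTop := by
      rw [tendsto_atTop]
      intro b
      rw [eventually_atTop]
      exact ⟨b, fun m hm => by have := hw2 m; omega⟩
    obtain ⟨z, φ, hφ, hlim, hzY, hzav⟩ := escape_limit c Dq q hSfin wseq hwtop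
    have hzZp : z ∈ Zp := ⟨hzY, hzav⟩
    have hzt : z t = z 0 := by
      have := congrFun (ht z hzZp) 0
      rw [shift_apply, zero_add] at this
      exact this
    obtain ⟨j, hj0, hjt⟩ := ((tendsto_eventually_eq hlim (0 : ℤ × ℤ)).and
      (tendsto_eventually_eq hlim t)).exists
    rw [shift_apply, zero_add] at hj0
    rw [shift_apply] at hjt
    apply hw1 (φ j)
    rw [show wseq (φ j) + t = t + wseq (φ j) by abel, hjt, hzt, ← hj0]
  have hGv := hbad (0, TT) (fun z hz => (hZperT z hz).2)
  have hGh := hbad (TT, 0) (fun z hz => (hZperT z hz).1)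
  obtain ⟨N0, hN0⟩ := exists_nrm_bound (hGv.union hGh)
  set N : ℕ := N0 with hN
  have hEv : EvPer c TT N := by
    intro w hw
    constructor
    · by_contra hne
      have := hN0 w (Set.mem_union_left _ hne)
      omega
    · by_contra hne
      have := hN0 w (Set.mem_union_right _ hne)
      omega
  -- the background differs from c somewhere (in the N-box)
  have hdiffE : ∃ w0 : ℤ × ℤ, nrm w0 ≤ N ∧ c w0 ≠ ebg c TT N w0 := by
    by_contra hno
    push_neg at hno
    have hceq : c = ebg c TT N := by
      funext w
      rcases le_or_gt (nrm w) N with h | h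
      · exact hno w h
      · exact (ebg_agrees hEv hT1 w h).symm
    apply hnoper (0, TT) (by
      intro hcon
      have := congrArg Prod.snd hcon
      simp at this
      omega)
    rw [hceq]
    exact ebg_per_v hEv hT1
  obtain ⟨w0, hw0N, hw0ne⟩ := hdiffE
  -- bound on the sizes of the forbidden patterns
  set R : ℕ := Finset.univ.sup (fun i : Fin n => (Dv i).sup (fun d => nrm d)) with hR
  have hRb : ∀ (i : Fin n), ∀ d ∈ Dv i, nrm d ≤ R := by
    intro i d hd
    calc nrm d ≤ (Dv i).sup (fun d => nrm d) := Finset.le_sup hd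
    _ ≤ R := Finset.le_sup (f := fun i : Fin n => (Dv i).sup (fun d => nrm d)) (Finset.mem_univ i)
  -- spacing for the copies of the defect
  set C : ℤ := ((2 * N + 2 * R + 2 : ℕ) : ℤ) with hC
  set M : ℤ := TT * C with hM
  have hC0 : 0 ≤ C := by positivity
  have hMC : C ≤ M := le_mul_of_one_le_left hC0 hT1
  have hMge : 2 * (N : ℤ) + 2 * (R : ℤ) + 2 ≤ M := by
    have : ((2 * N + 2 * R + 2 : ℕ) : ℤ) = 2 * (N : ℤ) + 2 * (R : ℤ) + 2 := by push_cast; ring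
    omega
  -- the background is invariant under translations by multiples of TT
  have hebg_shift : ∀ v : ℤ × ℤ, (∃ s1 s2 : ℤ, v = (TT * s1, TT * s2)) →
      ∀ w, ebg c TT N (w + v) = ebg c TT N w := by
    rintro v ⟨s1, s2, rfl⟩ w
    have h1 := shift_zsmul_eq (ebg_per_h hEv hT1) s1
    have h2 := shift_zsmul_eq (ebg_per_v hEv hT1) s2
    have h3 := shift_add_period h1 h2
    have hv : (s1 • ((TT : ℤ), (0 : ℤ)) + s2 • ((0 : ℤ), (TT : ℤ))) = (TT * s1, TT * s2) := by
      show ((s1 * TT + s2 * 0 : ℤ), (s1 * 0 + s2 * TT : ℤ)) = (TT * s1, TT * s2)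
      exact hpair _ _ _ _ (by ring) (by ring)
    rw [hv] at h3
    calc ebg c TT N (w + (TT * s1, TT * s2))
        = shift (TT * s1, TT * s2) (ebg c TT N) w := rfl
    _ = ebg c TT N w := by rw [h3]
  -- uniqueness of defect-copy indices, with slack 2R
  have huniq : ∀ (w w' : ℤ × ℤ) (k k' : ℕ),
      nrm (w - (((k : ℤ) + 1) * M, 0)) ≤ N → nrm (w' - (((k' : ℤ) + 1) * M, 0)) ≤ N →
      nrm (w - w') ≤ 2 * R → k = k' := by
    intro w w' k k' h1 h2 h3
    by_contra hkk
    rw [nrm_le_iff] at h1 h2 h3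
    have hf1 := h1.1
    have hf2 := h2.1
    have hf3 := h3.1
    simp only [Prod.fst_sub] at hf1 hf2 hf3
    rcases Nat.lt_or_ge k k' with hlt | hge
    · have hd : (1 : ℤ) ≤ (k' : ℤ) - (k : ℤ) := by omega
      have hmul : M ≤ ((k' : ℤ) - (k : ℤ)) * M := le_mul_of_one_le_left (by omega) hd
      have hsplit : ((k' : ℤ) + 1) * M = ((k : ℤ) + 1) * M + ((k' : ℤ) - (k : ℤ)) * M := by ring
      omega
    · have hlt : k' < k := by omega
      have hd : (1 : ℤ) ≤ (k : ℤ) - (k' : ℤ) := by omega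
      have hmul : M ≤ ((k : ℤ) - (k' : ℤ)) * M := le_mul_of_one_le_left (by omega) hd
      have hsplit : ((k : ℤ) + 1) * M = ((k' : ℤ) + 1) * M + ((k : ℤ) - (k' : ℤ)) * M := by ring
      omega
  -- the family of configurations indexed by subsets of ℕ
  set xL : Set ℕ → Config A := fun L w =>
    if h : ∃ k, k ∈ L ∧ nrm (w - (((k : ℤ) + 1) * M, 0)) ≤ N then
      c (w - (((h.choose : ℤ) + 1) * M, 0))
    else ebg c TT N w
    with hxL
  have hxc : ∀ (L : Set ℕ) (w : ℤ × ℤ) (k : ℕ), k ∈ L →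
      nrm (w - (((k : ℤ) + 1) * M, 0)) ≤ N →
      xL L w = c (w - (((k : ℤ) + 1) * M, 0)) := by
    intro L w k hk hN'
    have hex : ∃ k', k' ∈ L ∧ nrm (w - (((k' : ℤ) + 1) * M, 0)) ≤ N := ⟨k, hk, hN'⟩
    have hch := hex.choose_spec
    have hkeq : hex.choose = k := by
      refine huniq w w _ _ hch.2 hN' ?_
      simp [nrm]
    rw [hxL]
    simp only
    rw [dif_pos hex, hkeq]
  have hxe : ∀ (L : Set ℕ) (w : ℤ × ℤ),
      (¬ ∃ k, k ∈ L ∧ nrm (w - (((k : ℤ) + 1) * M, 0)) ≤ N) →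
      xL L w = ebg c TT N w := by
    intro L w hw
    rw [hxL]
    simp only
    rw [dif_neg hw]
  -- validity: every R-box of xL L matches an R-box of c
  have hval : ∀ (L : Set ℕ) (u' : ℤ × ℤ), ∃ u'' : ℤ × ℤ,
      ∀ s : ℤ × ℤ, nrm s ≤ R → xL L (u' + s) = c (u'' + s) := by
    intro L u'
    by_cases hcase : ∃ k, k ∈ L ∧ ∃ s0 : ℤ × ℤ, nrm s0 ≤ R ∧
        nrm ((u' + s0) - (((k : ℤ) + 1) * M, 0)) ≤ N
    · obtain ⟨k, hkL, s0, hs0R, hs0N⟩ := hcase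
      refine ⟨u' - (((k : ℤ) + 1) * M, 0), fun s hsR => ?_⟩
      have harr : (u' + s) - (((k : ℤ) + 1) * M, 0) = (u' - (((k : ℤ) + 1) * M, 0)) + s := by
        abel
      by_cases hw : ∃ k', k' ∈ L ∧ nrm ((u' + s) - (((k' : ℤ) + 1) * M, 0)) ≤ N
      · obtain ⟨k', hk'L, hk'N⟩ := hw
        have hkk : k' = k := by
          refine huniq _ _ _ _ hk'N hs0N ?_
          have : (u' + s) - (u' + s0) = s - s0 := by abel
          rw [this]
          have h1 := nrm_add_le s (-s0)
          have h2 : nrm (-s0) = nrm s0 := by simp [nrm]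
          have : s - s0 = s + (-s0) := by abel
          rw [this]
          omega
        rw [hxc L _ k (hkk ▸ hk'L) (hkk ▸ hk'N), harr]
      · rw [hxe L _ hw]
        have hnN : N < nrm ((u' + s) - (((k : ℤ) + 1) * M, 0)) := by
          by_contra hcon
          push_neg at hcon
          exact hw ⟨k, hkL, hcon⟩
        have hsh : ebg c TT N (u' + s) = ebg c TT N ((u' + s) - (((k : ℤ) + 1) * M, 0)) := by
          have := hebg_shift (-((((k : ℤ) + 1) * M, 0) : ℤ × ℤ))
            ⟨-(((k : ℤ) + 1) * C), 0, by
              refine hpair _ _ _ _ ?_ (by simp)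
              show -(((k : ℤ) + 1) * M) = TT * -(((k : ℤ) + 1) * C)
              rw [hM]; ring⟩ (u' + s)
          rw [← this]
          congr 1 <;> abel
        rw [hsh, ebg_agrees hEv hT1 _ hnN, harr]
    · push_neg at hcase
      set mm : ℤ := (N : ℤ) + (R : ℤ) + 1 + u'.2.natAbs with hmm
      have hmm0 : 0 ≤ mm := by positivity
      refine ⟨u' + (0, TT * mm), fun s hsR => ?_⟩
      have hnot : ¬ ∃ k, k ∈ L ∧ nrm ((u' + s) - (((k : ℤ) + 1) * M, 0)) ≤ N := by
        rintro ⟨k, hk, hN'⟩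
        have hgt := hcase k hk s hsR
        omega
      rw [hxe L _ hnot]
      have hsh : ebg c TT N (u' + s) = ebg c TT N ((u' + s) + (0, TT * mm)) :=
        (hebg_shift ((0, TT * mm) : ℤ × ℤ) ⟨0, mm, by
          refine hpair _ _ _ _ (by ring) rfl⟩ (u' + s)).symm
      have hbig : N < nrm ((u' + s) + (0, TT * mm)) := by
        have hsnd : ((u' + s) + (0, TT * mm)).2 = u'.2 + s.2 + TT * mm := by simp
        have hmmle : mm ≤ TT * mm := le_mul_of_one_le_left hmm0 hT1
        have hs2 : s.2.natAbs ≤ R := by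
          rw [nrm_le_iff] at hsR
          exact hsR.2
        have hgoal : (N : ℤ) < ((u' + s) + (0, TT * mm)).2 := by
          rw [hsnd]
          omega
        have := nrm_le_iff (w := (u' + s) + (0, TT * mm)) (N := N)
        by_contra hcon
        push_neg at hcon
        have h2 := (this.mp hcon).2
        omega
      rw [hsh, ebg_agrees hEv hT1 _ hbig]
      congr 1
      abel
  -- every xL L belongs to X
  have hmemX : ∀ L : Set ℕ, xL L ∈ X := by
    intro L
    rw [hXeq]
    intro i u' happ
    obtain ⟨u'', hu''⟩ := hval L u'
    apply hcavoid i u''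
    intro d hd
    rw [← hu'' d (hRb i d hd)]
    exact happ d hd
  -- xL is injective
  have hinj : Function.Injective xL := by
    intro L L' hLL
    have hpt : ∀ (L0 : Set ℕ) (k : ℕ),
        (k ∈ L0 → xL L0 (w0 + (((k : ℤ) + 1) * M, 0)) = c w0) ∧
        (k ∉ L0 → xL L0 (w0 + (((k : ℤ) + 1) * M, 0)) = ebg c TT N w0) := by
      intro L0 k
      have harr : (w0 + (((k : ℤ) + 1) * M, 0)) - (((k : ℤ) + 1) * M, 0) = w0 := by abel
      constructor
      · intro hk
        have := hxc L0 _ k hk (by rw [harr]; exact hw0N)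
        rwa [harr] at this
      · intro hk
        have h1 : xL L0 (w0 + (((k : ℤ) + 1) * M, 0)) =
            ebg c TT N (w0 + (((k : ℤ) + 1) * M, 0)) := by
          apply hxe
          rintro ⟨k', hk', hN'⟩
          have : k' = k := by
            refine huniq _ _ _ _ hN' (by rw [harr]; exact hw0N) ?_
            simp [nrm]
          exact hk (this ▸ hk')
        rw [h1]
        exact hebg_shift ((((k : ℤ) + 1) * M, 0) : ℤ × ℤ)
          ⟨((k : ℤ) + 1) * C, 0, by
            refine hpair _ _ _ _ ?_ (by simp)
            rw [hM]; ring⟩ w0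
    ext k
    constructor
    · intro hk
      by_contra hk'
      have h1 := (hpt L k).1 hk
      have h2 := (hpt L' k).2 hk'
      rw [hLL] at h1
      rw [h1] at h2
      exact hw0ne h2
    · intro hk
      by_contra hk'
      have h1 := (hpt L' k).1 hk
      have h2 := (hpt L k).2 hk'
      rw [← hLL] at h1
      rw [h1] at h2
      exact hw0ne h2
  -- uncountably many configurations in the countable X : contradiction
  have hcnt : Countable (Set ℕ) := by
    have hr : Set.range xL ⊆ X := by
      rintro _ ⟨L, rfl⟩
      exact hmemX L
    have hcr : (Set.range xL).Countable := hcount.mono hr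
    haveI := hcr.to_subtype
    exact Countable.of_equiv _ (Equiv.ofInjective xL hinj).symm
  obtain ⟨F, hF⟩ := (countable_iff_exists_injective (Set ℕ)).mp hcnt
  exact Function.cantor_injective F hF


end CountableSubshift
end

section
/- Let A = {0,1} (a two-element type) and let X ⊆ A^(ℤ×ℤ) be the set of configurations having at most one coordinate equal to 1. Then: (1) X is a countable subshift; (2) the configuration c defined by c(0,0) = 1 and c(u) = 0 for u ≠ (0,0) is at level 1 in X; (3) the pattern p : {(0,0)} → A with p(0,0) = 1 appears in c at exactly one position; and (4) every y ∈ X with y ≺ c equals the all-zero configuration, so c has exactly one configuration strictly below it for ⪯. (This shows that the conclusion 'every pattern of a level-1 configuration appears infinitely often', valid for countable SFTs, fails for general countable subshifts.) -/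
namespace CountableSubshift

variable {A : Type*}

variable [TopologicalSpace A]

/-- The subshift of configurations over `Bool` with at most one cell equal to `true`. -/
def atMostOneOne : Set (Config Bool) :=
  {x | ∀ u u' : ℤ × ℤ, x u = true → x u' = true → u = u'}

/-- The configuration with a single `true` at the origin. -/
def singleOne : Config Bool := fun u => if u = (0, 0) then true else false

/-- The all-false configuration. -/
def allFalse : Config Bool := fun _ => false

lemma shift_neg_shift (v : ℤ × ℤ) (x : Config Bool) : shift (-v) (shift v x) = x := by
  funext u; simp [shift, neg_add_cancel_right]

lemma shift_shift_neg (v : ℤ × ℤ) (x : Config Bool) : shift v (shift (-v) x) = x := by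
  funext u; simp [shift, add_neg_cancel_right]

lemma preceq_refl (x : Config Bool) : Preceq x x :=
  subset_closure ⟨0, by funext u; simp [shift]⟩

lemma shift_mem_X {x : Config Bool} (hx : x ∈ atMostOneOne) (v : ℤ × ℤ) :
    shift v x ∈ atMostOneOne := by
  intro u u' h h'
  have := hx (u + v) (u' + v) h h'
  exact add_right_cancel this

lemma isClosed_X : IsClosed atMostOneOne := by
  have : atMostOneOne = ⋂ (p : (ℤ × ℤ) × (ℤ × ℤ)),
      {x : Config Bool | x p.1 = true → x p.2 = true → p.1 = p.2} := by
    ext x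
    simp only [Set.mem_iInter, atMostOneOne, Set.mem_setOf_eq]
    exact ⟨fun h p => h p.1 p.2, fun h u u' => h (u, u')⟩
  rw [this]
  refine isClosed_iInter fun p => ?_
  by_cases h : p.1 = p.2
  · have : {x : Config Bool | x p.1 = true → x p.2 = true → p.1 = p.2} = Set.univ := by
      ext x; simp [h]
    rw [this]; exact isClosed_univ
  · have heq : {x : Config Bool | x p.1 = true → x p.2 = true → p.1 = p.2}
        = ({x : Config Bool | x p.1 = true} ∩ {x | x p.2 = true})ᶜ := by
      ext x
      simp only [Set.mem_setOf_eq, Set.mem_compl_iff, Set.mem_inter_iff]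
      tauto
    rw [heq]
    have h1 : IsOpen {x : Config Bool | x p.1 = true} := by
      have h := (continuous_apply (A := fun _ : ℤ × ℤ => Bool) p.1).isOpen_preimage ({true} : Set Bool) (isOpen_discrete _)
      exact h
    have h2 : IsOpen {x : Config Bool | x p.2 = true} := by
      have h := (continuous_apply (A := fun _ : ℤ × ℤ => Bool) p.2).isOpen_preimage ({true} : Set Bool) (isOpen_discrete _)
      exact h
    exact (h1.inter h2).isClosed_compl

lemma X_eq : atMostOneOne = orbit singleOne ∪ {allFalse} := by
  ext y
  constructor
  · intro hy
    by_cases h : ∃ u, y u = true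
    · obtain ⟨u₀, hu₀⟩ := h
      left
      refine ⟨-u₀, funext fun u => ?_⟩
      by_cases hu : u = u₀
      · subst hu
        simp [shift, singleOne, hu₀, Prod.mk_zero_zero]
      · have hyu : y u = false := by
          cases hyu : y u with
          | false => rfl
          | true => exact absurd (hy u u₀ hyu hu₀) hu
        have : u + -u₀ ≠ 0 := by
          rw [← sub_eq_add_neg, sub_ne_zero]; exact hu
        simp [shift, singleOne, this, hyu, Prod.mk_zero_zero]
    · push_neg at h
      right
      refine Set.mem_singleton_iff.mpr (funext fun u => ?_)
      cases hyu : y u with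
      | false => rfl
      | true => exact absurd hyu (h u)
  · intro hy
    rcases hy with ⟨v, rfl⟩ | hy
    · intro u u' h h'
      simp only [shift, singleOne] at h h'
      have hu : u + v = 0 := by by_contra hc; simp [hc, Prod.mk_zero_zero] at h
      have hu' : u' + v = 0 := by by_contra hc; simp [hc, Prod.mk_zero_zero] at h'
      exact add_right_cancel (hu.trans hu'.symm)
    · rw [Set.mem_singleton_iff] at hy
      subst hy
      intro u u' h _
      simp [allFalse] at h

lemma closure_orbit_sub : closure (orbit singleOne) ⊆ atMostOneOne :=
  closure_minimal (by rw [X_eq]; exact Set.subset_union_left) isClosed_X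

lemma allFalse_mem_closure : allFalse ∈ closure (orbit singleOne) := by
  have ht : Filter.Tendsto (fun n : ℕ => shift ((n : ℤ) + 1, 0) singleOne)
      Filter.atTop (nhds allFalse) := by
    rw [tendsto_pi_nhds]
    intro u
    have heq : (fun _ : ℕ => (false : Bool)) =ᶠ[Filter.atTop]
        fun n : ℕ => shift ((n : ℤ) + 1, 0) singleOne u := by
      filter_upwards [Filter.eventually_ge_atTop u.1.natAbs] with n hn
      simp only [shift, singleOne]
      rw [if_neg]
      intro hc
      rw [Prod.ext_iff] at hc
      have h1 : u.1 + ((n : ℤ) + 1) = 0 := hc.1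
      omega
    exact Filter.Tendsto.congr' heq tendsto_const_nhds
  exact mem_closure_of_tendsto ht (Filter.Eventually.of_forall fun n => ⟨_, rfl⟩)

lemma orbit_allFalse : orbit allFalse = {allFalse} := by
  have : (fun v : ℤ × ℤ => shift v allFalse) = fun _ => allFalse := by
    funext v; rfl
  rw [orbit, this, Set.range_const]

lemma not_preceq_singleOne_allFalse : ¬ Preceq singleOne allFalse := by
  intro h
  rw [Preceq, orbit_allFalse, closure_singleton, Set.mem_singleton_iff] at h
  have := congrFun h (0, 0)
  simp [singleOne, allFalse] at this

lemma allFalse_mem_X : allFalse ∈ atMostOneOne := by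
  intro u u' h _; simp [allFalse] at h

lemma level0_allFalse : Level0 atMostOneOne allFalse := by
  refine ⟨allFalse_mem_X, fun z hz hpz => ?_⟩
  rw [Preceq, orbit_allFalse, closure_singleton, Set.mem_singleton_iff] at hpz
  subst hpz
  exact preceq_refl _

lemma singleOne_mem_X : singleOne ∈ atMostOneOne := by
  intro u u' h h'
  simp only [singleOne] at h h'
  have hu : u = 0 := by by_contra hc; simp [hc, Prod.mk_zero_zero] at h
  have hu' : u' = 0 := by by_contra hc; simp [hc, Prod.mk_zero_zero] at h'
  rw [hu, hu']

lemma prec_singleOne_eq_allFalse {y : Config Bool} (hy : Prec y singleOne) :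
    y = allFalse := by
  obtain ⟨h1, h2⟩ := hy
  have hyX : y ∈ orbit singleOne ∪ {allFalse} := by
    rw [← X_eq]; exact closure_orbit_sub h1
  rcases hyX with ⟨v, rfl⟩ | hy
  · exfalso
    apply h2
    exact subset_closure ⟨-v, shift_neg_shift v singleOne⟩
  · exact hy

theorem stmt16 :
    (IsSubshift atMostOneOne ∧ atMostOneOne.Countable) ∧
    Level1 atMostOneOne singleOne ∧
    (AppearsAt {((0, 0) : ℤ × ℤ)} (fun _ => true) singleOne (0, 0) ∧
      ∀ u : ℤ × ℤ, AppearsAt {((0, 0) : ℤ × ℤ)} (fun _ => true) singleOne u → u = (0, 0)) ∧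
    (∀ y ∈ atMostOneOne, Prec y singleOne → y = fun _ => false) := by
  refine ⟨⟨⟨⟨allFalse, allFalse_mem_X⟩, isClosed_X, fun v => ?_⟩, ?_⟩, ?_, ⟨?_, ?_⟩, ?_⟩
  · -- shift invariance
    ext y
    constructor
    · rintro ⟨x, hx, rfl⟩
      exact shift_mem_X hx v
    · intro hy
      exact ⟨shift (-v) y, shift_mem_X hy (-v), shift_shift_neg v y⟩
  · -- countable
    rw [X_eq]
    exact (Set.countable_range _).union (Set.countable_singleton _)
  · -- Level1
    refine ⟨singleOne_mem_X, ?_, ?_⟩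
    · intro h
      exact not_preceq_singleOne_allFalse (h.2 allFalse allFalse_mem_X allFalse_mem_closure)
    · intro y hy hpy
      rw [prec_singleOne_eq_allFalse hpy]
      exact level0_allFalse
  · -- pattern appears at (0,0)
    intro d hd
    rw [Finset.mem_singleton] at hd
    subst hd
    simp [singleOne]
  · -- pattern appears only at (0,0)
    intro u hu
    have := hu (0, 0) (Finset.mem_singleton_self _)
    simp only [singleOne] at this
    have h0 : u + (((0 : ℤ), (0 : ℤ))) = ((0 : ℤ), (0 : ℤ)) := by
      by_contra hc
      rw [if_neg hc] at this
      exact Bool.false_ne_true this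
    simpa [Prod.mk_zero_zero] using h0
  · -- strictly below singleOne is allFalse
    intro y _ hy
    exact prec_singleOne_eq_allFalse hy

end CountableSubshift
end
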